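/- arXiv:2405.14565 — 3 statements merged into one kernel-verified Lean document; each statement's English description precedes it below -/
import Mathlib

section
/- Let G : ℝ^d × ℝ → ℝ^d, G = G(x,ω), be a locally Lipschitz function, let ξ ∈ L^∞_loc(ℝ), and let B ⊂ ℝ be a bounded Lebesgue measurable set. Then for almost every x ∈ ℝ^d (with respect to d-dimensional Lebesgue measure), the function x ↦ ∫_B ξ(ω) G(x,ω) dω is differentiable at x and D_x ∫_B ξ(ω) G(x,ω) dω = ∫_B ξ(ω) D_x G(x,ω) dω. -/
open MeasureTheory Filter Set
open scoped Topology RealInnerProductSpace NNReal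

set_option maxHeartbeats 2000000

noncomputable section

/-- A locally Lipschitz function is Lipschitz on every compact set. -/
theorem locallyLipschitz_exists_lipschitzOnWith
    {α β : Type*} [PseudoMetricSpace α] [PseudoMetricSpace β] {f : α → β}
    (hf : LocallyLipschitz f) {s : Set α} (hs : IsCompact s) :
    ∃ K : ℝ≥0, LipschitzOnWith K f s := by
  have hfc : Continuous f := hf.continuous
  choose K T hT hL using hf
  obtain ⟨F, hFs, hFcov⟩ := hs.elim_nhds_subcover (fun x => interior (T x))
    (fun x _ => interior_mem_nhds.2 (hT x))
  obtain ⟨M, hM⟩ := Metric.isBounded_iff.1 (hs.image hfc).isBounded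
  obtain ⟨δ, hδ0, hδ⟩ := lebesgue_number_lemma_of_metric (c := fun i : F => interior (T i.1)) hs
    (fun i => isOpen_interior)
    (by
      intro x hx
      obtain ⟨i, hiF, hxi⟩ := Set.mem_iUnion₂.1 (hFcov hx)
      exact Set.mem_iUnion.2 ⟨⟨i, hiF⟩, hxi⟩)
  refine ⟨F.sup K ⊔ (M / δ).toNNReal, lipschitzOnWith_iff_dist_le_mul.2 ?_⟩
  intro x hx y hy
  rcases lt_or_ge (dist x y) δ with h | h
  · obtain ⟨i, hi⟩ := hδ x hx
    have hxi : x ∈ T i.1 := interior_subset (hi (Metric.mem_ball_self hδ0))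
    have hyi : y ∈ T i.1 := interior_subset (hi (by simpa [Metric.mem_ball, dist_comm] using h))
    calc dist (f x) (f y) ≤ K i.1 * dist x y := (hL i.1).dist_le_mul x hxi y hyi
    _ ≤ (F.sup K ⊔ (M / δ).toNNReal : ℝ≥0) * dist x y := by
        gcongr
        exact_mod_cast le_sup_of_le_left (Finset.le_sup i.2)
  · have hxim : f x ∈ f '' s := mem_image_of_mem f hx
    have hyim : f y ∈ f '' s := mem_image_of_mem f hy
    have h0 : (0:ℝ) ≤ M := le_trans dist_nonneg (hM hxim hxim)
    have h1 : dist (f x) (f y) ≤ M := hM hxim hyim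
    have h2 : M ≤ M / δ * dist x y := by
      rw [div_mul_eq_mul_div, le_div_iff₀ hδ0]
      exact mul_le_mul_of_nonneg_left h h0
    calc dist (f x) (f y) ≤ M / δ * dist x y := h1.trans h2
    _ ≤ (F.sup K ⊔ (M / δ).toNNReal : ℝ≥0) * dist x y := by
        gcongr
        calc M / δ ≤ ((M / δ).toNNReal : ℝ) := Real.le_coe_toNNReal _
        _ ≤ _ := by exact_mod_cast le_sup_right

/-- Rademacher's theorem for locally Lipschitz functions between Euclidean spaces. -/
theorem locallyLipschitz_ae_differentiableAt {d e : ℕ}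
    {f : EuclideanSpace ℝ (Fin d) → EuclideanSpace ℝ (Fin e)} (hf : LocallyLipschitz f) :
    ∀ᵐ x ∂(volume : Measure (EuclideanSpace ℝ (Fin d))), DifferentiableAt ℝ f x := by
  have H : ∀ n : ℕ, ∀ᵐ x ∂(volume : Measure (EuclideanSpace ℝ (Fin d))),
      x ∈ Metric.closedBall (0 : EuclideanSpace ℝ (Fin d)) (n + 1) →
        DifferentiableWithinAt ℝ f (Metric.closedBall 0 (n + 1)) x := fun n => by
    obtain ⟨K, hK⟩ := locallyLipschitz_exists_lipschitzOnWith hf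
      (isCompact_closedBall (0 : EuclideanSpace ℝ (Fin d)) (n + 1))
    exact hK.ae_differentiableWithinAt_of_mem
  filter_upwards [ae_all_iff.2 H] with x hx
  set n : ℕ := ⌈‖x‖⌉₊ with hn
  have hxball : x ∈ Metric.ball (0 : EuclideanSpace ℝ (Fin d)) (n + 1) := by
    simp only [Metric.mem_ball, dist_zero_right]
    exact lt_of_le_of_lt (Nat.le_ceil _) (by exact_mod_cast lt_add_one (n : ℝ))
  exact (hx n (Metric.ball_subset_closedBall hxball)).differentiableAt
    (mem_nhds_iff.2 ⟨_, Metric.ball_subset_closedBall, Metric.isOpen_ball, hxball⟩)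

/-- Differentiation under the integral sign for Lipschitz functions:
if `G : ℝ^d × ℝ → ℝ^d` is locally Lipschitz, `ξ ∈ L^∞_loc(ℝ)` and `B ⊆ ℝ` is a bounded
measurable set, then for a.e. `x ∈ ℝ^d` the map `x ↦ ∫_B ξ(ω) G(x,ω) dω` is differentiable
at `x` with differential `∫_B ξ(ω) D_x G(x,ω) dω`. -/
theorem statement1 {d : ℕ}
    (G : EuclideanSpace ℝ (Fin d) → ℝ → EuclideanSpace ℝ (Fin d))
    (hG : LocallyLipschitz (Function.uncurry G))
    (ξ : ℝ → ℝ) (hξmeas : Measurable ξ)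
    (hξloc : ∀ K : Set ℝ, IsCompact K → ∃ C : ℝ, ∀ᵐ ω ∂(volume : Measure ℝ), ω ∈ K → |ξ ω| ≤ C)
    (B : Set ℝ) (hBmeas : MeasurableSet B) (hBbdd : Bornology.IsBounded B) :
    ∀ᵐ x : EuclideanSpace ℝ (Fin d) ∂volume,
      HasFDerivAt (fun x' => ∫ ω in B, ξ ω • G x' ω)
        (∫ ω in B, ξ ω • fderiv ℝ (fun x' => G x' ω) x) x := by
  classical
  obtain ⟨R, hR⟩ := hBbdd.subset_closedBall 0
  set Kc : Set ℝ := Metric.closedBall 0 R with hKcdef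
  have hKcomp : IsCompact Kc := isCompact_closedBall _ _
  have hBK : B ⊆ Kc := hR
  obtain ⟨C₀, hC₀⟩ := hξloc Kc hKcomp
  set Cξ : ℝ := max C₀ 0 with hCξdef
  have hCξ0 : (0:ℝ) ≤ Cξ := le_max_right _ _
  have hCξ : ∀ᵐ ω ∂(volume : Measure ℝ), ω ∈ B → |ξ ω| ≤ Cξ := by
    filter_upwards [hC₀] with ω h hω
    exact (h (hBK hω)).trans (le_max_left _ _)
  have hBfin : volume B < ⊤ :=
    lt_of_le_of_lt (measure_mono hBK) measure_closedBall_lt_top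
  haveI : IsFiniteMeasure (volume.restrict B) :=
    ⟨by rwa [Measure.restrict_apply_univ]⟩
  have hGcont : Continuous (Function.uncurry G) := hG.continuous
  have hGx : ∀ x' : EuclideanSpace ℝ (Fin d), Continuous (fun ω => G x' ω) :=
    fun x' => hGcont.comp (Continuous.prodMk_right x')
  have hmeas : ∀ x' : EuclideanSpace ℝ (Fin d),
      AEStronglyMeasurable (fun ω => ξ ω • G x' ω) (volume.restrict B) :=
    fun x' => hξmeas.aestronglyMeasurable.smul (hGx x').aestronglyMeasurable
  -- integrability of the integrand
  have hint : ∀ x' : EuclideanSpace ℝ (Fin d),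
      Integrable (fun ω => ξ ω • G x' ω) (volume.restrict B) := by
    intro x'
    obtain ⟨M, hM⟩ : ∃ M, ∀ ω ∈ Kc, ‖G x' ω‖ ≤ M := by
      obtain ⟨M, hM⟩ := (isBounded_iff_forall_norm_le).1 (hKcomp.image (hGx x')).isBounded
      exact ⟨M, fun ω hω => hM _ (mem_image_of_mem _ hω)⟩
    refine (integrable_const (Cξ * M)).mono' (hmeas x') ?_
    filter_upwards [ae_restrict_of_ae hCξ, ae_restrict_mem hBmeas] with ω h1 h2
    rw [norm_smul]
    exact mul_le_mul (by simpa [Real.norm_eq_abs] using h1 h2) (hM ω (hBK h2))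
      (norm_nonneg _) hCξ0
  -- Lipschitz constants on products of balls with `Kc`
  have hKr : ∀ r : ℝ, ∃ K : ℝ≥0, LipschitzOnWith K (Function.uncurry G)
      (Metric.closedBall (0 : EuclideanSpace ℝ (Fin d)) r ×ˢ Kc) :=
    fun r => locallyLipschitz_exists_lipschitzOnWith hG
      ((isCompact_closedBall _ _).prod hKcomp)
  have hslice : ∀ (r : ℝ) (K : ℝ≥0), LipschitzOnWith K (Function.uncurry G)
      (Metric.closedBall (0 : EuclideanSpace ℝ (Fin d)) r ×ˢ Kc) →
      ∀ ω ∈ Kc, LipschitzOnWith K (fun x' => G x' ω)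
        (Metric.closedBall (0 : EuclideanSpace ℝ (Fin d)) r) := by
    intro r K hK ω hω
    rw [lipschitzOnWith_iff_dist_le_mul]
    intro x hx y hy
    have h := hK.dist_le_mul (x, ω) (Set.mk_mem_prod hx hω) (y, ω) (Set.mk_mem_prod hy hω)
    simpa [Function.uncurry, Prod.dist_eq, dist_self, max_eq_left dist_nonneg] using h
  -- the integral function is locally Lipschitz
  have hFlip : ∀ r : ℝ, ∃ c : ℝ≥0, LipschitzOnWith c
      (fun x' => ∫ ω in B, ξ ω • G x' ω)
      (Metric.closedBall (0 : EuclideanSpace ℝ (Fin d)) r) := by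
    intro r
    obtain ⟨K, hK⟩ := hKr r
    refine ⟨(Cξ * K * (volume B).toReal).toNNReal, lipschitzOnWith_iff_dist_le_mul.2 ?_⟩
    intro x hx y hy
    rw [dist_eq_norm, ← integral_sub (hint x) (hint y)]
    have hb : ∀ᵐ ω ∂(volume.restrict B),
        ‖ξ ω • G x ω - ξ ω • G y ω‖ ≤ Cξ * (K * dist x y) := by
      filter_upwards [ae_restrict_of_ae hCξ, ae_restrict_mem hBmeas] with ω h1 h2
      rw [← smul_sub, norm_smul]
      have hg : ‖G x ω - G y ω‖ ≤ K * dist x y := by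
        have := (hslice r K hK ω (hBK h2)).dist_le_mul x hx y hy
        simpa [dist_eq_norm] using this
      exact mul_le_mul (by simpa [Real.norm_eq_abs] using h1 h2) hg (norm_nonneg _) hCξ0
    have hn := norm_integral_le_of_norm_le_const hb
    rw [measureReal_def, Measure.restrict_apply_univ] at hn
    refine hn.trans ?_
    rw [Real.coe_toNNReal _ (by positivity)]
    exact le_of_eq (by ring)
  have hFll : LocallyLipschitz (fun x' => ∫ ω in B, ξ ω • G x' ω) := by
    intro x
    obtain ⟨c, hc⟩ := hFlip (‖x‖ + 1)
    refine ⟨c, Metric.closedBall 0 (‖x‖ + 1), ?_, hc⟩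
    refine mem_nhds_iff.2 ⟨Metric.ball 0 (‖x‖ + 1), Metric.ball_subset_closedBall,
      Metric.isOpen_ball, ?_⟩
    simp [Metric.mem_ball, dist_zero_right]
  -- measurability with parameter
  have hfc : Continuous
      (Function.uncurry (fun (ω : ℝ) (x' : EuclideanSpace ℝ (Fin d)) => G x' ω)) :=
    hGcont.comp continuous_swap
  have hDmeas : MeasurableSet {p : ℝ × EuclideanSpace ℝ (Fin d) |
      DifferentiableAt ℝ (fun x' => G x' p.1) p.2} :=
    measurableSet_of_differentiableAt_with_param ℝ hfc
  -- Fubini: for a.e. x, for a.e. ω ∈ B, `G (·, ω)` is differentiable at x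
  set M : Set (EuclideanSpace ℝ (Fin d) × ℝ) :=
    {q | q.2 ∈ B ∧ ¬ DifferentiableAt ℝ (fun x' => G x' q.2) q.1} with hMdef
  have hMmeas : MeasurableSet M := by
    have h1 : MeasurableSet {q : EuclideanSpace ℝ (Fin d) × ℝ | q.2 ∈ B} :=
      measurable_snd hBmeas
    have h2 : MeasurableSet {q : EuclideanSpace ℝ (Fin d) × ℝ |
        DifferentiableAt ℝ (fun x' => G x' q.2) q.1} := measurable_swap hDmeas
    exact h1.inter h2.compl
  have hMnull : (volume.prod (volume : Measure ℝ)) M = 0 := by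
    have hsec : ∀ ω : ℝ, volume ((fun x : EuclideanSpace ℝ (Fin d) => (x, ω)) ⁻¹' M) = 0 := by
      intro ω
      by_cases hω : ω ∈ B
      · have hll : LocallyLipschitz (fun x' => G x' ω) := by
          have h := hG.comp (LocallyLipschitz.prodMk_right
            (α := EuclideanSpace ℝ (Fin d)) ω)
          simpa [Function.comp_def, Function.uncurry] using h
        have hae := locallyLipschitz_ae_differentiableAt hll
        rw [ae_iff] at hae
        exact measure_mono_null (fun x hx => hx.2) hae
      · have : ((fun x : EuclideanSpace ℝ (Fin d) => (x, ω)) ⁻¹' M) = ∅ := by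
          ext x; simp [hMdef, hω]
        simp [this]
    rw [Measure.prod_apply_symm hMmeas]
    simp [hsec]
  have hae : ∀ᵐ x ∂(volume : Measure (EuclideanSpace ℝ (Fin d))),
      ∀ᵐ ω ∂(volume : Measure ℝ), ω ∈ B → DifferentiableAt ℝ (fun x' => G x' ω) x := by
    have h1 : ∀ᵐ q ∂(volume.prod (volume : Measure ℝ)), q ∉ M := by
      rw [ae_iff]
      simpa using hMnull
    have h2 := MeasureTheory.Measure.ae_ae_of_ae_prod h1
    filter_upwards [h2] with x hx
    filter_upwards [hx] with ω hω hωB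
    by_contra hc
    exact hω ⟨hωB, hc⟩
  -- strong measurability and integrability of the derivative integrand
  have hfderiv_meas : ∀ x : EuclideanSpace ℝ (Fin d),
      AEStronglyMeasurable (fun ω => ξ ω • fderiv ℝ (fun x' => G x' ω) x)
        (volume.restrict B) := by
    intro x
    have h1 : Measurable (fun ω : ℝ => fderiv ℝ (fun x' => G x' ω) x) :=
      (measurable_fderiv_with_param ℝ hfc).comp (measurable_id.prodMk measurable_const)
    exact hξmeas.aestronglyMeasurable.smul h1.aestronglyMeasurable
  have hball : ∀ (x : EuclideanSpace ℝ (Fin d)) (r : ℝ), ‖x‖ < r →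
      Metric.closedBall (0 : EuclideanSpace ℝ (Fin d)) r ∈ 𝓝 x := by
    intro x r hr
    refine mem_nhds_iff.2 ⟨Metric.ball 0 r, Metric.ball_subset_closedBall,
      Metric.isOpen_ball, ?_⟩
    simpa [Metric.mem_ball, dist_zero_right] using hr
  have hfderiv_int : ∀ x : EuclideanSpace ℝ (Fin d),
      Integrable (fun ω => ξ ω • fderiv ℝ (fun x' => G x' ω) x) (volume.restrict B) := by
    intro x
    obtain ⟨K, hK⟩ := hKr (‖x‖ + 1)
    refine (integrable_const (Cξ * K)).mono' (hfderiv_meas x) ?_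
    filter_upwards [ae_restrict_of_ae hCξ, ae_restrict_mem hBmeas] with ω h1 h2
    rw [norm_smul]
    have hf' : ‖fderiv ℝ (fun x' => G x' ω) x‖ ≤ K :=
      norm_fderiv_le_of_lipschitzOn ℝ (hball x (‖x‖ + 1) (by linarith))
        (hslice _ K hK ω (hBK h2))
    exact mul_le_mul (by simpa [Real.norm_eq_abs] using h1 h2) hf'
      (norm_nonneg _) hCξ0
  -- main argument
  filter_upwards [locallyLipschitz_ae_differentiableAt hFll, hae] with x hFd hDiff
  have hL : fderiv ℝ (fun x' => ∫ ω in B, ξ ω • G x' ω) x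
      = ∫ ω in B, ξ ω • fderiv ℝ (fun x' => G x' ω) x := by
    apply ContinuousLinearMap.ext
    intro v
    obtain ⟨K, hK⟩ := hKr (‖x‖ + ‖v‖ + 1)
    have hNeBot : (𝓝[≠] (0:ℝ)).NeBot := inferInstance
    -- derivative of the composed map along the line t ↦ x + t v, from differentiability of F
    have hline : HasDerivAt (fun t : ℝ => x + t • v) v 0 := by
      simpa using ((hasDerivAt_id (0:ℝ)).smul_const v).const_add x
    have hq1 : Tendsto (slope (fun t : ℝ => ∫ ω in B, ξ ω • G (x + t • v) ω) 0) (𝓝[≠] (0:ℝ))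
        (𝓝 (fderiv ℝ (fun x' => ∫ ω in B, ξ ω • G x' ω) x v)) := by
      have h0 : x + (0:ℝ) • v = x := by simp
      have hcomp := HasFDerivAt.comp_hasDerivAt (0:ℝ)
        (by rw [h0]; exact hFd.hasFDerivAt) hline
      exact hasDerivAt_iff_tendsto_slope.1 (by simpa [Function.comp_def] using hcomp)
    -- dominated convergence for the difference quotients
    have hDCT : Tendsto
        (fun t : ℝ => ∫ ω in B, t⁻¹ • (ξ ω • G (x + t • v) ω - ξ ω • G x ω)) (𝓝[≠] (0:ℝ))
        (𝓝 (∫ ω in B, ξ ω • (fderiv ℝ (fun x' => G x' ω) x) v)) := by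
      apply tendsto_integral_filter_of_dominated_convergence
          (bound := fun _ : ℝ => Cξ * (K * ‖v‖))
      · filter_upwards with t
        exact (((hint (x + t • v)).sub (hint x)).aestronglyMeasurable.const_smul t⁻¹)
      · have hsmall : ∀ᶠ t : ℝ in 𝓝[≠] (0:ℝ), |t| ≤ 1 ∧ t ≠ 0 := by
          have h1 : ∀ᶠ t : ℝ in 𝓝 (0:ℝ), |t| ≤ 1 := by
            have := Metric.closedBall_mem_nhds (0:ℝ) one_pos
            filter_upwards [this] with t ht
            simpa [Real.dist_eq] using ht
          exact (eventually_nhdsWithin_of_eventually_nhds h1).and self_mem_nhdsWithin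
        filter_upwards [hsmall] with t ht
        obtain ⟨ht1, ht0⟩ := ht
        filter_upwards [ae_restrict_of_ae hCξ, ae_restrict_mem hBmeas] with ω h1 h2
        rw [← smul_sub, norm_smul, norm_smul]
        have hx1 : x + t • v ∈ Metric.closedBall (0 : EuclideanSpace ℝ (Fin d))
            (‖x‖ + ‖v‖ + 1) := by
          rw [Metric.mem_closedBall, dist_zero_right]
          calc ‖x + t • v‖ ≤ ‖x‖ + ‖t • v‖ := norm_add_le _ _
          _ = ‖x‖ + |t| * ‖v‖ := by rw [norm_smul, Real.norm_eq_abs]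
          _ ≤ ‖x‖ + 1 * ‖v‖ := by gcongr
          _ ≤ ‖x‖ + ‖v‖ + 1 := by linarith
        have hx2 : x ∈ Metric.closedBall (0 : EuclideanSpace ℝ (Fin d))
            (‖x‖ + ‖v‖ + 1) := by
          rw [Metric.mem_closedBall, dist_zero_right]
          have := norm_nonneg v; linarith
        have hg : ‖G (x + t • v) ω - G x ω‖ ≤ K * (|t| * ‖v‖) := by
          have := (hslice _ K hK ω (hBK h2)).dist_le_mul (x + t • v) hx1 x hx2
          rw [dist_eq_norm] at this
          simpa [norm_smul, Real.norm_eq_abs] using this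
        have habs : (0:ℝ) < |t| := abs_pos.2 ht0
        calc ‖t⁻¹‖ * (‖ξ ω‖ * ‖G (x + t • v) ω - G x ω‖)
            ≤ |t|⁻¹ * (Cξ * (K * (|t| * ‖v‖))) := by
              rw [Real.norm_eq_abs t⁻¹, abs_inv]
              refine mul_le_mul_of_nonneg_left ?_ (by positivity)
              exact mul_le_mul (by simpa [Real.norm_eq_abs] using h1 h2) hg
                (norm_nonneg _) hCξ0
        _ = Cξ * (K * ‖v‖) := by
              field_simp
      · exact integrable_const _
      · filter_upwards [ae_restrict_of_ae hDiff, ae_restrict_mem hBmeas] with ω hdiff hω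
        have hd : DifferentiableAt ℝ (fun x' => G x' ω) x := hdiff hω
        have h0 : x + (0:ℝ) • v = x := by simp
        have hcomp := HasFDerivAt.comp_hasDerivAt (0:ℝ)
          (by rw [h0]; exact hd.hasFDerivAt) hline
        have hslopet := hasDerivAt_iff_tendsto_slope.1
          (by simpa [Function.comp_def] using hcomp :
            HasDerivAt (fun t : ℝ => G (x + t • v) ω)
              (fderiv ℝ (fun x' => G x' ω) x v) 0)
        have heq : (fun t : ℝ => t⁻¹ • (ξ ω • G (x + t • v) ω - ξ ω • G x ω))
            = fun t : ℝ => ξ ω • slope (fun s : ℝ => G (x + s • v) ω) 0 t := by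
          funext t
          rw [slope_def_module]
          simp [smul_sub, smul_comm (ξ ω)]
        rw [heq]
        exact hslopet.const_smul (ξ ω)
    have hq2 : Tendsto (slope (fun t : ℝ => ∫ ω in B, ξ ω • G (x + t • v) ω) 0) (𝓝[≠] (0:ℝ))
        (𝓝 (∫ ω in B, ξ ω • (fderiv ℝ (fun x' => G x' ω) x) v)) := by
      apply hDCT.congr'
      filter_upwards [self_mem_nhdsWithin] with t ht
      have ht0 : t ≠ 0 := ht
      rw [slope_def_module]
      simp only [zero_smul, add_zero, sub_zero]
      rw [← integral_sub (hint (x + t • v)) (hint x), ← integral_smul]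
    have huniq := tendsto_nhds_unique hq1 hq2
    rw [huniq, ContinuousLinearMap.integral_apply (hfderiv_int x)]
    simp
  rw [← hL]
  exact hFd.hasFDerivAt
end
end

section
/- Let f : ℝ^d × ℝ → ℝ^d satisfy: (1) f is locally Lipschitz on ℝ^d × ℝ; (2a) there is a Lebesgue null set Θ ⊂ ℝ^d such that for every k ∈ ℝ the map x ↦ f(x,k) is differentiable at every x ∉ Θ, and for every x ∉ Θ the map k ↦ D_x f(x,k) is continuous; (2b) for every x ∉ Θ and every compact K ⊂ ℝ, lim_{y→x} sup_{k∈K} |f(y,k) − f(x,k) − D_x f(x,k)(y−x)|/|y−x| = 0. Let η ∈ C²(ℝ), k₀ ∈ ℝ, and q(x,k) := ∫_{k₀}^{k} η'(ω) ∂_ω f(x,ω) dω. Then the family {q(·,k)}_{k∈ℝ} is uniformly differentiable almost everywhere: for every x ∉ Θ, every k ∈ ℝ, the map y ↦ q(y,k) is differentiable at x, and for every compact K ⊂ ℝ, lim_{y→x} sup_{k∈K} |q(y,k) − q(x,k) − D_x q(x,k)(y−x)|/|y−x| = 0. -/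
open MeasureTheory Filter Set
open scoped Topology RealInnerProductSpace

noncomputable section

open intervalIntegral
open scoped NNReal

section AuxLemmas

open intervalIntegral
open scoped NNReal

variable {E : Type*} [NormedAddCommGroup E] [NormedSpace ℝ E] [FiniteDimensional ℝ E]

set_option linter.unusedSectionVars false

theorem locallyLipschitz_lipschitzOnWith_Icc {g : ℝ → E} (hg : LocallyLipschitz g)
    (a b : ℝ) : ∃ C : ℝ≥0, LipschitzOnWith C g (Icc a b) := by
  choose K s hs hl using hg
  have hcov : Icc a b ⊆ ⋃ x : ℝ, interior (s x) := fun y hy =>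
    mem_iUnion.2 ⟨y, mem_interior_iff_mem_nhds.2 (hs y)⟩
  obtain ⟨T, hT⟩ := isCompact_Icc.elim_finite_subcover (fun x : ℝ => interior (s x))
    (fun x => isOpen_interior) hcov
  obtain ⟨δ, hδ, hleb⟩ := lebesgue_number_lemma_of_metric (s := Icc a b)
    (c := fun i : T => interior (s (i : ℝ))) isCompact_Icc (fun i => isOpen_interior)
    (by intro y hy
        obtain ⟨i, hi, hyi⟩ := mem_iUnion₂.1 (hT hy)
        exact mem_iUnion.2 ⟨⟨i, hi⟩, hyi⟩)
  set C : ℝ≥0 := T.sup K with hC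
  have hloc : ∀ u ∈ Icc a b, ∀ v ∈ Icc a b, dist u v < δ →
      dist (g u) (g v) ≤ (C : ℝ) * dist u v := by
    intro u hu v hv huv
    obtain ⟨i, hi⟩ := hleb u hu
    have hui : u ∈ s (i : ℝ) := interior_subset (hi (Metric.mem_ball_self hδ))
    have hvi : v ∈ s (i : ℝ) := interior_subset (hi (by simpa [Metric.mem_ball, dist_comm] using huv))
    have h := (lipschitzOnWith_iff_dist_le_mul.1 (hl (i : ℝ))) u hui v hvi
    refine h.trans ?_
    gcongr
    exact_mod_cast Finset.le_sup (f := K) i.2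
  have hchain : ∀ u ∈ Icc a b, ∀ v ∈ Icc a b, u ≤ v → dist (g u) (g v) ≤ (C : ℝ) * (v - u) := by
    intro u hu v hv huv
    set n : ℕ := ⌈(v - u) / δ⌉₊ + 1 with hn
    have hn0 : 0 < (n : ℝ) := by positivity
    set p : ℕ → ℝ := fun i => u + (i : ℝ) * ((v - u) / n) with hp
    have hvu : 0 ≤ v - u := by linarith
    have hgap : (v - u) / n < δ := by
      rw [div_lt_iff₀ hn0]
      have h1 : (v - u) / δ < n := by
        calc (v-u)/δ ≤ ⌈(v - u) / δ⌉₊ := Nat.le_ceil _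
        _ < n := by exact_mod_cast Nat.lt_succ_self _
      calc v - u = ((v-u)/δ) * δ := by field_simp
      _ < n * δ := mul_lt_mul_of_pos_right h1 hδ
      _ = δ * n := mul_comm _ _
    have hgap0 : 0 ≤ (v - u) / n := by positivity
    have hpmem : ∀ i : ℕ, i ≤ n → p i ∈ Icc a b := by
      intro i hi
      simp only [hp]
      constructor
      · have : 0 ≤ (i : ℝ) * ((v - u)/n) := by positivity
        linarith [hu.1]
      · have h3 : (i : ℝ) * ((v - u)/n) ≤ n * ((v-u)/n) := by
          apply mul_le_mul_of_nonneg_right _ hgap0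
          exact_mod_cast hi
        have h2 : (n : ℝ) * ((v-u)/n) = v - u := by field_simp
        rw [h2] at h3
        linarith [hv.2]
    have hp0 : p 0 = u := by simp [hp]
    have hpn : p n = v := by
      simp only [hp]
      field_simp
      ring
    have key : dist (g (p 0)) (g (p n)) ≤ ∑ i ∈ Finset.Ico 0 n, ((C : ℝ) * ((v-u)/(n:ℝ))) := by
      apply dist_le_Ico_sum_of_dist_le (f := fun i => g (p i)) (d := fun _ => (C : ℝ) * ((v-u)/(n:ℝ))) (Nat.zero_le n)
      intro k _ hk
      have h1 : p k ∈ Icc a b := hpmem k (le_of_lt hk)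
      have h2 : p (k+1) ∈ Icc a b := hpmem (k+1) hk
      have hd : dist (p k) (p (k+1)) = (v-u)/n := by
        rw [Real.dist_eq]
        have h4 : p (k+1) - p k = (v-u)/n := by simp only [hp]; push_cast; ring
        rw [abs_sub_comm, h4, abs_of_nonneg hgap0]
      have h5 := hloc (p k) h1 (p (k+1)) h2 (by rw [hd]; exact hgap)
      rw [hd] at h5
      exact h5
    rw [hp0, hpn] at key
    refine key.trans ?_
    simp only [Finset.sum_const, Nat.card_Ico, Nat.sub_zero, nsmul_eq_mul]
    rw [← mul_assoc, mul_comm (n:ℝ) (C:ℝ), mul_assoc]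
    gcongr
    exact le_of_eq (by field_simp)
  refine ⟨C, lipschitzOnWith_iff_dist_le_mul.2 ?_⟩
  intro u hu v hv
  rcases le_total u v with h | h
  · have hd : dist u v = v - u := by
      rw [Real.dist_eq, abs_of_nonpos (by linarith), neg_sub]
    rw [hd]; exact hchain u hu v hv h
  · have hd : dist u v = u - v := by
      rw [Real.dist_eq, abs_of_nonneg (by linarith)]
    rw [hd, dist_comm]; exact hchain v hv u hu h

-- difference quotient tendsto along right-neighborhoods of 0
theorem tendsto_right_quot {g : ℝ → E} {t : ℝ} (hg : DifferentiableAt ℝ g t) :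
    Tendsto (fun h : ℝ => h⁻¹ • (g (t + h) - g t)) (𝓝[>] (0:ℝ)) (𝓝 (deriv g t)) := by
  have hslope := hasDerivAt_iff_tendsto_slope.1 hg.hasDerivAt
  have hmap : Tendsto (fun h : ℝ => t + h) (𝓝[>] (0:ℝ)) (𝓝[≠] t) := by
    apply tendsto_nhdsWithin_of_tendsto_nhds_of_eventually_within
    · have : Tendsto (fun h : ℝ => t + h) (𝓝 (0:ℝ)) (𝓝 t) := by
        simpa using (continuous_add_left t).tendsto (0:ℝ)
      exact this.mono_left nhdsWithin_le_nhds
    · filter_upwards [self_mem_nhdsWithin] with h (hh : (0:ℝ) < h)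
      simp [hh.ne']
  have := hslope.comp hmap
  refine this.congr fun h => ?_
  simp [slope_def_module]

theorem ftc_lipschitzWith_core {C : ℝ≥0} {g : ℝ → E} (hg : LipschitzWith C g)
    {a b : ℝ} (hab : a ≤ b) :
    (∫ t in a..b, deriv g t) = g b - g a := by
  have hgc : Continuous g := hg.continuous
  have hae : ∀ᵐ t : ℝ, DifferentiableAt ℝ g t := hg.ae_differentiableAt
  -- I h := ∫ t in a..b, h⁻¹ • (g (t+h) - g t)
  have h1 : Tendsto (fun h : ℝ => ∫ t in a..b, h⁻¹ • (g (t + h) - g t)) (𝓝[>] (0:ℝ))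
      (𝓝 (∫ t in a..b, deriv g t)) := by
    simp only [intervalIntegral.integral_of_le hab]
    apply MeasureTheory.tendsto_integral_filter_of_dominated_convergence (fun _ => (C : ℝ))
    · filter_upwards with h
      exact (Continuous.aestronglyMeasurable (by fun_prop)).restrict
    · filter_upwards [self_mem_nhdsWithin] with h (hh : (0:ℝ) < h)
      filter_upwards with t
      rw [norm_smul, norm_inv, Real.norm_eq_abs, abs_of_pos hh]
      rw [inv_mul_le_iff₀ hh]
      have := hg.dist_le_mul (t + h) t
      rw [dist_eq_norm] at this
      simpa [Real.dist_eq, abs_of_pos hh, mul_comm] using this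
    · exact integrable_const _
    · exact (ae_restrict_of_ae hae).mono fun t ht => tendsto_right_quot ht
  have key : ∀ h : ℝ, (∫ t in a..b, h⁻¹ • (g (t + h) - g t))
      = h⁻¹ • ((∫ t in b..(b+h), g t) - ∫ t in a..(a+h), g t) := by
    intro h
    have hi : ∀ c e : ℝ, IntervalIntegrable g volume c e := fun c e => hgc.intervalIntegrable c e
    rw [intervalIntegral.integral_smul]
    congr 1
    rw [intervalIntegral.integral_sub (Continuous.intervalIntegrable (by fun_prop) a b : IntervalIntegrable (fun t => g (t+h)) volume a b) (hi a b),
      intervalIntegral.integral_comp_add_right g h]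
    have A : (∫ t in a..(a+h), g t) + (∫ t in (a+h)..b, g t) = ∫ t in a..b, g t :=
      integral_add_adjacent_intervals (hi _ _) (hi _ _)
    have B : (∫ t in (a+h)..b, g t) + (∫ t in b..(b+h), g t) = ∫ t in (a+h)..(b+h), g t :=
      integral_add_adjacent_intervals (hi _ _) (hi _ _)
    rw [← A, ← B]
    abel
  have quot : ∀ c : ℝ, Tendsto (fun h : ℝ => h⁻¹ • (∫ t in c..(c+h), g t)) (𝓝[>] (0:ℝ))
      (𝓝 (g c)) := by
    intro c
    have hF : HasDerivAt (fun u => ∫ t in c..u, g t) (g c) c :=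
      intervalIntegral.integral_hasDerivAt_right (hgc.intervalIntegrable c c)
        (hgc.stronglyMeasurableAtFilter _ _) hgc.continuousAt
    have hslope := hasDerivAt_iff_tendsto_slope.1 hF
    have hmap : Tendsto (fun h : ℝ => c + h) (𝓝[>] (0:ℝ)) (𝓝[≠] c) := by
      apply tendsto_nhdsWithin_of_tendsto_nhds_of_eventually_within
      · have : Tendsto (fun h : ℝ => c + h) (𝓝 (0:ℝ)) (𝓝 c) := by
          simpa using (continuous_add_left c).tendsto (0:ℝ)
        exact this.mono_left nhdsWithin_le_nhds
      · filter_upwards [self_mem_nhdsWithin] with h (hh : (0:ℝ) < h)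
        simp [hh.ne']
    have := hslope.comp hmap
    refine this.congr fun h => ?_
    simp [slope_def_module, intervalIntegral.integral_same]
  have h2 : Tendsto (fun h : ℝ => ∫ t in a..b, h⁻¹ • (g (t + h) - g t)) (𝓝[>] (0:ℝ))
      (𝓝 (g b - g a)) := by
    have := (quot b).sub (quot a)
    refine this.congr fun h => ?_
    rw [key h, smul_sub]
  exact tendsto_nhds_unique h1 h2

theorem exists_lipschitz_ext {g : ℝ → E} (hg : LocallyLipschitz g) (c d : ℝ) (hcd : c ≤ d) :
    ∃ (G : ℝ → E) (C : ℝ≥0), LipschitzWith C G ∧ ∀ t ∈ Icc c d, G t = g t := by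
  obtain ⟨C, hC⟩ := locallyLipschitz_lipschitzOnWith_Icc hg c d
  refine ⟨fun t => (Icc c d).restrict g (projIcc c d hcd t), C * 1,
    (lipschitzOnWith_iff_restrict.mp hC).comp (LipschitzWith.projIcc hcd), ?_⟩
  intro t ht
  simp [projIcc_of_mem hcd ht]
  rfl

theorem locallyLipschitz_ae_differentiableAt_s6 {g : ℝ → E} (hg : LocallyLipschitz g) :
    ∀ᵐ t : ℝ, DifferentiableAt ℝ g t := by
  have H : ∀ n : ℕ, ∀ᵐ t : ℝ, t ∈ Ioo (-(n:ℝ) - 1) ((n:ℝ) + 1) → DifferentiableAt ℝ g t := by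
    intro n
    obtain ⟨G, C, hG, hGe⟩ := exists_lipschitz_ext hg (-(n:ℝ) - 1) ((n:ℝ) + 1)
      (by have h0 : (0:ℝ) ≤ n := Nat.cast_nonneg n; linarith)
    filter_upwards [hG.ae_differentiableAt] with t ht hmem
    have heq : G =ᶠ[𝓝 t] g := by
      filter_upwards [Ioo_mem_nhds hmem.1 hmem.2] with u hu
      exact hGe u (Ioo_subset_Icc_self hu)
    exact (Filter.EventuallyEq.differentiableAt_iff heq).1 ht
  rw [← ae_all_iff] at H
  filter_upwards [H] with t ht
  refine ht ⌈|t|⌉₊ ⟨?_, ?_⟩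
  · have := Nat.le_ceil |t|
    have h2 := neg_abs_le t
    linarith
  · have := Nat.le_ceil |t|
    have h2 := le_abs_self t
    linarith

theorem ftc_locallyLipschitz {g : ℝ → E} (hg : LocallyLipschitz g) (a b : ℝ) :
    (∫ t in a..b, deriv g t) = g b - g a := by
  set c : ℝ := min a b - 1 with hc
  set d : ℝ := max a b + 1 with hd
  have hcd : c ≤ d := by
    have := min_le_max (a := a) (b := b); simp only [hc, hd]; linarith
  obtain ⟨G, C, hG, hGe⟩ := exists_lipschitz_ext hg c d hcd
  have hsub : uIcc a b ⊆ Ioo c d := by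
    intro t ht
    rw [uIcc, mem_Icc] at ht
    exact ⟨by simp only [hc]; linarith [ht.1], by simp only [hd]; linarith [ht.2]⟩
  have hderiv_eq : ∀ t ∈ uIcc a b, deriv g t = deriv G t := by
    intro t ht
    refine Filter.EventuallyEq.deriv_eq ?_
    have hmem := hsub ht
    filter_upwards [Ioo_mem_nhds hmem.1 hmem.2] with u hu
    exact (hGe u (Ioo_subset_Icc_self hu)).symm
  rw [intervalIntegral.integral_congr hderiv_eq]
  have hmema : a ∈ Icc c d := Icc_subset_Icc (by rfl) (by rfl) (Ioo_subset_Icc_self (hsub left_mem_uIcc))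
  have hmemb : b ∈ Icc c d := Ioo_subset_Icc_self (hsub right_mem_uIcc)
  rcases le_total a b with hab | hab
  · rw [ftc_lipschitzWith_core hG hab, hGe a (Ioo_subset_Icc_self (hsub left_mem_uIcc)),
      hGe b (Ioo_subset_Icc_self (hsub right_mem_uIcc))]
  · rw [intervalIntegral.integral_symm, ftc_lipschitzWith_core hG hab,
      hGe a (Ioo_subset_Icc_self (hsub left_mem_uIcc)),
      hGe b (Ioo_subset_Icc_self (hsub right_mem_uIcc))]
    abel

theorem norm_deriv_le_of_locallyLipschitz {g : ℝ → E} (hg : LocallyLipschitz g) (c d : ℝ) :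
    ∃ M : ℝ, 0 ≤ M ∧ ∀ t ∈ Icc c d, ‖deriv g t‖ ≤ M := by
  obtain ⟨C, hC⟩ := locallyLipschitz_lipschitzOnWith_Icc hg (c - 1) (d + 1)
  refine ⟨C, C.coe_nonneg, fun t ht => ?_⟩
  have hmem : Icc (c - 1) (d + 1) ∈ 𝓝 t := Icc_mem_nhds (by linarith [ht.1]) (by linarith [ht.2])
  calc ‖deriv g t‖ = ‖fderiv ℝ g t 1‖ := by rw [fderiv_apply_one_eq_deriv]
  _ ≤ ‖fderiv ℝ g t‖ * ‖(1:ℝ)‖ := ContinuousLinearMap.le_opNorm _ _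
  _ ≤ (C : ℝ) * 1 := by
      gcongr
      · exact norm_fderiv_le_of_lipschitzOn ℝ hmem hC
      · simp
  _ = C := mul_one _

theorem intervalIntegrable_smul_deriv {g : ℝ → E} (hg : LocallyLipschitz g)
    {φ : ℝ → ℝ} (hφ : Continuous φ) (a b : ℝ) :
    IntervalIntegrable (fun t => φ t • deriv g t) volume a b := by
  obtain ⟨M, hM0, hM⟩ := norm_deriv_le_of_locallyLipschitz hg (a ⊓ b) (a ⊔ b)
  obtain ⟨A, hA⟩ := (isCompact_uIcc (a := a) (b := b)).exists_bound_of_continuousOn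
    hφ.continuousOn
  rw [intervalIntegrable_iff]
  haveI : IsFiniteMeasure (volume.restrict (uIoc a b)) :=
    ⟨by rw [Measure.restrict_apply_univ]; exact measure_Ioc_lt_top⟩
  apply MeasureTheory.Integrable.mono' (g := fun _ => (|A| + 1) * M)
    (integrable_const _)
  · exact (hφ.aestronglyMeasurable.smul (aestronglyMeasurable_deriv g volume)).restrict
  · rw [ae_restrict_iff' measurableSet_uIoc]
    filter_upwards with t ht
    have ht' : t ∈ uIcc a b := uIoc_subset_uIcc ht
    rw [norm_smul]
    have h1 : ‖φ t‖ ≤ |A| + 1 := by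
      have := hA t ht'
      rw [Real.norm_eq_abs]
      calc |φ t| ≤ A := by simpa [Real.norm_eq_abs] using this
      _ ≤ |A| + 1 := by

        nlinarith [le_abs_self A]
    have h2 : ‖deriv g t‖ ≤ M := hM t (by rwa [uIcc] at ht')
    have h3 : (0:ℝ) ≤ ‖deriv g t‖ := norm_nonneg _
    have h4 : (0:ℝ) ≤ ‖φ t‖ := norm_nonneg _
    nlinarith

theorem locallyLipschitz_smul {g : ℝ → E} (hg : LocallyLipschitz g)
    {φ : ℝ → ℝ} (hφ : LocallyLipschitz φ) : LocallyLipschitz (fun t => φ t • g t) := by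
  intro x
  obtain ⟨Kg, hKg⟩ := locallyLipschitz_lipschitzOnWith_Icc hg (x - 1) (x + 1)
  obtain ⟨Kφ, hKφ⟩ := locallyLipschitz_lipschitzOnWith_Icc hφ (x - 1) (x + 1)
  obtain ⟨A, hA⟩ := (isCompact_Icc (a := x - 1) (b := x + 1)).exists_bound_of_continuousOn
    hφ.continuous.continuousOn
  obtain ⟨B, hB⟩ := (isCompact_Icc (a := x - 1) (b := x + 1)).exists_bound_of_continuousOn
    hg.continuous.continuousOn
  refine ⟨A.toNNReal * Kg + Kφ * B.toNNReal, Icc (x - 1) (x + 1),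
    Icc_mem_nhds (by linarith) (by linarith), ?_⟩
  rw [lipschitzOnWith_iff_dist_le_mul]
  intro u hu v hv
  have key : φ u • g u - φ v • g v = φ u • (g u - g v) + (φ u - φ v) • g v := by
    rw [smul_sub, sub_smul]; abel
  rw [dist_eq_norm, key]
  have h1 : ‖φ u • (g u - g v)‖ ≤ (A.toNNReal : ℝ) * ((Kg : ℝ) * dist u v) := by
    rw [norm_smul]
    apply mul_le_mul _ _ (norm_nonneg _) A.toNNReal.coe_nonneg
    · calc ‖φ u‖ ≤ A := hA u hu
      _ ≤ A.toNNReal := Real.le_coe_toNNReal A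
    · rw [← dist_eq_norm]
      exact lipschitzOnWith_iff_dist_le_mul.1 hKg u hu v hv
  have h2 : ‖(φ u - φ v) • g v‖ ≤ ((Kφ : ℝ) * dist u v) * (B.toNNReal : ℝ) := by
    rw [norm_smul]
    apply mul_le_mul _ _ (norm_nonneg _) (by positivity)
    · rw [← dist_eq_norm]
      exact lipschitzOnWith_iff_dist_le_mul.1 hKφ u hu v hv
    · calc ‖g v‖ ≤ B := hB v hv
      _ ≤ B.toNNReal := Real.le_coe_toNNReal B
  calc ‖φ u • (g u - g v) + (φ u - φ v) • g v‖
      ≤ ‖φ u • (g u - g v)‖ + ‖(φ u - φ v) • g v‖ := norm_add_le _ _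
  _ ≤ (A.toNNReal : ℝ) * ((Kg : ℝ) * dist u v) + ((Kφ : ℝ) * dist u v) * (B.toNNReal : ℝ) :=
      add_le_add h1 h2
  _ = ((A.toNNReal * Kg + Kφ * B.toNNReal : ℝ≥0) : ℝ) * dist u v := by
      push_cast; ring

theorem ibp_locallyLipschitz {g : ℝ → E} (hg : LocallyLipschitz g) {φ : ℝ → ℝ}
    (hφ : ContDiff ℝ 1 φ) (a b : ℝ) :
    (∫ t in a..b, φ t • deriv g t)
      = φ b • g b - φ a • g a - ∫ t in a..b, deriv φ t • g t := by
  have hφc : Continuous φ := hφ.continuous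
  have hφ' : Continuous (deriv φ) := hφ.continuous_deriv le_rfl
  have hP : LocallyLipschitz (fun t => φ t • g t) :=
    locallyLipschitz_smul hg hφ.locallyLipschitz
  have hftc : (∫ t in a..b, deriv (fun t => φ t • g t) t) = φ b • g b - φ a • g a :=
    ftc_locallyLipschitz hP a b
  have hae : ∀ᵐ t : ℝ, deriv (fun t => φ t • g t) t = deriv φ t • g t + φ t • deriv g t := by
    filter_upwards [locallyLipschitz_ae_differentiableAt_s6 hg] with t ht
    have h1 : HasDerivAt φ (deriv φ t) t := (hφ.differentiable one_ne_zero t).hasDerivAt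
    have := (h1.smul ht.hasDerivAt).deriv
    rw [show deriv (fun t => φ t • g t) t = deriv (φ • g) t from rfl, this]
    abel
  have hcong : (∫ t in a..b, deriv (fun t => φ t • g t) t)
      = ∫ t in a..b, (deriv φ t • g t + φ t • deriv g t) := by
    apply intervalIntegral.integral_congr_ae
    filter_upwards [hae] with t ht _
    exact ht
  have hi1 : IntervalIntegrable (fun t => deriv φ t • g t) volume a b :=
    (hφ'.smul hg.continuous).intervalIntegrable a b
  have hi2 : IntervalIntegrable (fun t => φ t • deriv g t) volume a b :=
    intervalIntegrable_smul_deriv hg hφc a b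
  rw [hcong, intervalIntegral.integral_add hi1 hi2] at hftc
  rw [← hftc]
  abel

end AuxLemmas

set_option maxHeartbeats 1000000 in
/-- Under Assumption 1, 2a, 2b on the flux `f`, the family
`{q(·,k)}_{k∈ℝ}` of entropy fluxes `q(x,k) := ∫_{k₀}^{k} η'(ω) ∂_ω f(x,ω) dω` is uniformly
differentiable almost everywhere: for every `x ∉ Θ` and every `k`, the map `y ↦ q(y,k)` is
differentiable at `x`, and for every compact `K ⊆ ℝ`,
`lim_{y→x} sup_{k∈K} |q(y,k) − q(x,k) − D_x q(x,k)(y−x)|/|y−x| = 0`. -/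
theorem statement6 {d : ℕ}
    (f : EuclideanSpace ℝ (Fin d) → ℝ → EuclideanSpace ℝ (Fin d))
    (hf : LocallyLipschitz (Function.uncurry f))
    (Θ : Set (EuclideanSpace ℝ (Fin d))) (hΘ : volume Θ = 0)
    (hdiff : ∀ k : ℝ, ∀ x ∉ Θ, DifferentiableAt ℝ (fun y => f y k) x)
    (hcont : ∀ x ∉ Θ, Continuous fun k : ℝ => fderiv ℝ (fun y => f y k) x)
    (hunif : ∀ x ∉ Θ, ∀ K : Set ℝ, IsCompact K →
      ∀ ε > 0, ∃ δ > 0, ∀ y : EuclideanSpace ℝ (Fin d), ‖y - x‖ < δ →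
        ∀ k ∈ K, ‖f y k - f x k - fderiv ℝ (fun z => f z k) x (y - x)‖ ≤ ε * ‖y - x‖)
    (η : ℝ → ℝ) (hη : ContDiff ℝ 2 η) (k₀ : ℝ) :
    ∀ x ∉ Θ,
      (∀ k : ℝ, DifferentiableAt ℝ
        (fun y => ∫ ω in k₀..k, deriv η ω • deriv (fun w => f y w) ω) x) ∧
      (∀ K : Set ℝ, IsCompact K →
        ∀ ε > 0, ∃ δ > 0, ∀ y : EuclideanSpace ℝ (Fin d), ‖y - x‖ < δ →
          ∀ k ∈ K,
            ‖(∫ ω in k₀..k, deriv η ω • deriv (fun w => f y w) ω)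
              - (∫ ω in k₀..k, deriv η ω • deriv (fun w => f x w) ω)
              - fderiv ℝ (fun z => ∫ ω in k₀..k, deriv η ω • deriv (fun w => f z w) ω) x
                  (y - x)‖ ≤ ε * ‖y - x‖) := by
  have hφ1 : ContDiff ℝ 1 (deriv η) := by
    have h2 : ContDiff ℝ (1 + 1 : ℕ) η := by exact_mod_cast hη
    exact (contDiff_succ_iff_deriv.mp h2).2.2
  have hη' : Continuous (deriv η) := hφ1.continuous
  have hη'' : Continuous (deriv (deriv η)) := hφ1.continuous_deriv le_rfl
  have hlip : ∀ y, LocallyLipschitz (fun ω => f y ω) := by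
    intro y ω₀
    obtain ⟨K, s, hs, hl⟩ := hf (y, ω₀)
    refine ⟨K, (fun ω : ℝ => (y, ω)) ⁻¹' s, ?_, ?_⟩
    · exact (Continuous.prodMk_right y).continuousAt.preimage_mem_nhds hs
    · intro u hu v hv
      have h := hl hu hv
      calc edist (f y u) (f y v)
          = edist (Function.uncurry f (y, u)) (Function.uncurry f (y, v)) := rfl
      _ ≤ K * edist ((y, u) : EuclideanSpace ℝ (Fin d) × ℝ) (y, v) := h
      _ = K * edist u v := by rw [Prod.edist_eq]; simp
  have key : ∀ y k, (∫ ω in k₀..k, deriv η ω • deriv (fun w => f y w) ω)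
      = deriv η k • f y k - deriv η k₀ • f y k₀
        - ∫ ω in k₀..k, deriv (deriv η) ω • f y ω :=
    fun y k => ibp_locallyLipschitz (hlip y) hφ1 k₀ k
  have hfun : ∀ k, (fun z => ∫ ω in k₀..k, deriv η ω • deriv (fun w => f z w) ω)
      = (fun z => deriv η k • f z k - deriv η k₀ • f z k₀
          - ∫ ω in k₀..k, deriv (deriv η) ω • f z ω) :=
    fun k => funext fun z => key z k
  intro x hx
  set Df : ℝ → (EuclideanSpace ℝ (Fin d) →L[ℝ] EuclideanSpace ℝ (Fin d)) :=
    fun k => fderiv ℝ (fun y => f y k) x with hDf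
  have hDfc : Continuous Df := hcont x hx
  have hLint : ∀ a b : ℝ, IntervalIntegrable (fun ω => deriv (deriv η) ω • Df ω) volume a b :=
    fun a b => (hη''.smul hDfc).intervalIntegrable a b
  set L : ℝ → (EuclideanSpace ℝ (Fin d) →L[ℝ] EuclideanSpace ℝ (Fin d)) :=
    fun k => ∫ ω in k₀..k, deriv (deriv η) ω • Df ω with hL
  set D : ℝ → (EuclideanSpace ℝ (Fin d) →L[ℝ] EuclideanSpace ℝ (Fin d)) :=
    fun k => deriv η k • Df k - deriv η k₀ • Df k₀ - L k with hD
  -- master estimate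
  have master : ∀ R : ℝ, |k₀| ≤ R → ∀ ε > 0, ∃ δ > 0,
      ∀ y : EuclideanSpace ℝ (Fin d), ‖y - x‖ < δ → ∀ k ∈ Icc (-R) R,
        ‖(deriv η k • f y k - deriv η k₀ • f y k₀
            - ∫ ω in k₀..k, deriv (deriv η) ω • f y ω)
          - (deriv η k • f x k - deriv η k₀ • f x k₀
            - ∫ ω in k₀..k, deriv (deriv η) ω • f x ω)
          - D k (y - x)‖ ≤ ε * ‖y - x‖ := by
    intro R hR ε hε
    have hR0 : 0 ≤ R := le_trans (abs_nonneg k₀) hR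
    have hk₀mem : k₀ ∈ Icc (-R) R := by
      constructor <;> [linarith [neg_abs_le k₀]; linarith [le_abs_self k₀]]
    obtain ⟨M1, hM1⟩ := (isCompact_Icc (a := -R) (b := R)).exists_bound_of_continuousOn
      hη'.continuousOn
    obtain ⟨M2, hM2⟩ := (isCompact_Icc (a := -R) (b := R)).exists_bound_of_continuousOn
      hη''.continuousOn
    have hM10 : 0 ≤ M1 := le_trans (norm_nonneg _) (hM1 k₀ hk₀mem)
    have hM20 : 0 ≤ M2 := le_trans (norm_nonneg _) (hM2 k₀ hk₀mem)
    set ε' : ℝ := ε / (2 * M1 + 2 * R * M2 + 1) with hε'def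
    have hden : 0 < 2 * M1 + 2 * R * M2 + 1 := by positivity
    have hε' : 0 < ε' := div_pos hε hden
    obtain ⟨δ, hδ0, hδ⟩ := hunif x hx (Icc (-R) R) isCompact_Icc ε' hε'
    refine ⟨δ, hδ0, fun y hy k hk => ?_⟩
    set r : ℝ → EuclideanSpace ℝ (Fin d) := fun ω => f y ω - f x ω - Df ω (y - x) with hr
    have hrb : ∀ ω ∈ Icc (-R) R, ‖r ω‖ ≤ ε' * ‖y - x‖ := fun ω hω => hδ y hy ω hω
    have hsubIcc : uIcc k₀ k ⊆ Icc (-R) R := uIcc_subset_Icc hk₀mem hk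
    -- continuity of pieces
    have hcy : Continuous fun ω => f y ω := (hlip y).continuous
    have hcx : Continuous fun ω => f x ω := (hlip x).continuous
    have hcDf : Continuous fun ω => Df ω (y - x) := hDfc.clm_apply continuous_const
    -- rewrite D k applied
    have hDapp : D k (y - x) = deriv η k • Df k (y - x) - deriv η k₀ • Df k₀ (y - x)
        - ∫ ω in k₀..k, deriv (deriv η) ω • Df ω (y - x) := by
      have hLapp : L k (y - x) = ∫ ω in k₀..k, deriv (deriv η) ω • Df ω (y - x) := by
        rw [hL]
        rw [ContinuousLinearMap.intervalIntegral_apply (hLint k₀ k)]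
        simp
      simp only [hD, ContinuousLinearMap.sub_apply, ContinuousLinearMap.smul_apply, hLapp]
    -- integral difference
    have hint : (∫ ω in k₀..k, deriv (deriv η) ω • f y ω)
        - (∫ ω in k₀..k, deriv (deriv η) ω • f x ω)
        - (∫ ω in k₀..k, deriv (deriv η) ω • Df ω (y - x))
        = ∫ ω in k₀..k, deriv (deriv η) ω • r ω := by
      rw [← intervalIntegral.integral_sub (f := fun ω => deriv (deriv η) ω • f y ω)
        (g := fun ω => deriv (deriv η) ω • f x ω) ((hη''.smul hcy).intervalIntegrable _ _)
        ((hη''.smul hcx).intervalIntegrable _ _),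
        ← intervalIntegral.integral_sub
          (f := fun ω => deriv (deriv η) ω • f y ω - deriv (deriv η) ω • f x ω)
          (g := fun ω => deriv (deriv η) ω • Df ω (y - x))
          (((hη''.smul hcy).sub (hη''.smul hcx)).intervalIntegrable _ _)
          ((hη''.smul hcDf).intervalIntegrable _ _)]
      congr 1
      funext ω
      simp only [hr, smul_sub]
    have heq : (deriv η k • f y k - deriv η k₀ • f y k₀
            - ∫ ω in k₀..k, deriv (deriv η) ω • f y ω)
          - (deriv η k • f x k - deriv η k₀ • f x k₀
            - ∫ ω in k₀..k, deriv (deriv η) ω • f x ω)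
          - D k (y - x)
        = deriv η k • r k - deriv η k₀ • r k₀ - ∫ ω in k₀..k, deriv (deriv η) ω • r ω := by
      rw [hDapp, ← hint]
      simp only [hr, smul_sub]
      abel
    rw [heq]
    -- bound the three pieces
    have hb1 : ‖deriv η k • r k‖ ≤ M1 * (ε' * ‖y - x‖) := by
      rw [norm_smul]
      exact mul_le_mul (hM1 k hk) (hrb k hk) (norm_nonneg _) hM10
    have hb2 : ‖deriv η k₀ • r k₀‖ ≤ M1 * (ε' * ‖y - x‖) := by
      rw [norm_smul]
      exact mul_le_mul (hM1 k₀ hk₀mem) (hrb k₀ hk₀mem) (norm_nonneg _) hM10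
    have hb3 : ‖∫ ω in k₀..k, deriv (deriv η) ω • r ω‖ ≤ (M2 * (ε' * ‖y - x‖)) * |k - k₀| := by
      apply intervalIntegral.norm_integral_le_of_norm_le_const
      intro ω hω
      have hωm : ω ∈ Icc (-R) R := hsubIcc (uIoc_subset_uIcc hω)
      rw [norm_smul]
      exact mul_le_mul (hM2 ω hωm) (hrb ω hωm) (norm_nonneg _) hM20
    have habs : |k - k₀| ≤ 2 * R := by
      rw [abs_sub_le_iff]
      constructor <;> [linarith [hk.1, hk.2, hk₀mem.1, hk₀mem.2];
        linarith [hk.1, hk.2, hk₀mem.1, hk₀mem.2]]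
    have hb3' : ‖∫ ω in k₀..k, deriv (deriv η) ω • r ω‖ ≤ M2 * (ε' * ‖y - x‖) * (2 * R) := by
      refine hb3.trans ?_
      have : 0 ≤ M2 * (ε' * ‖y - x‖) := by positivity
      exact mul_le_mul_of_nonneg_left habs this
    calc ‖deriv η k • r k - deriv η k₀ • r k₀ - ∫ ω in k₀..k, deriv (deriv η) ω • r ω‖
        ≤ ‖deriv η k • r k - deriv η k₀ • r k₀‖
          + ‖∫ ω in k₀..k, deriv (deriv η) ω • r ω‖ := norm_sub_le _ _
      _ ≤ (‖deriv η k • r k‖ + ‖deriv η k₀ • r k₀‖)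
          + ‖∫ ω in k₀..k, deriv (deriv η) ω • r ω‖ := by
            gcongr
            exact norm_sub_le _ _
      _ ≤ (M1 * (ε' * ‖y - x‖) + M1 * (ε' * ‖y - x‖)) + M2 * (ε' * ‖y - x‖) * (2 * R) := by
            gcongr
      _ = (2 * M1 + 2 * R * M2) * ε' * ‖y - x‖ := by ring
      _ ≤ ε * ‖y - x‖ := by
            apply mul_le_mul_of_nonneg_right _ (norm_nonneg _)
            rw [hε'def, ← mul_div_assoc, div_le_iff₀ hden]
            nlinarith [hε.le]
    -- end master
  have hhas : ∀ k : ℝ, HasFDerivAt (fun z => deriv η k • f z k - deriv η k₀ • f z k₀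
      - ∫ ω in k₀..k, deriv (deriv η) ω • f z ω) (D k) x := by
    intro k
    rw [hasFDerivAt_iff_isLittleO_nhds_zero]
    rw [Asymptotics.isLittleO_iff]
    intro c hc
    obtain ⟨δ, hδ0, hδ⟩ := master (max |k| |k₀|) (le_max_right _ _) c hc
    have hkm : k ∈ Icc (-(max |k| |k₀|)) (max |k| |k₀|) := by
      constructor
      · have := neg_abs_le k; have := le_max_left |k| |k₀|; linarith
      · have := le_abs_self k; have := le_max_left |k| |k₀|; linarith
    filter_upwards [Metric.ball_mem_nhds (0 : EuclideanSpace ℝ (Fin d)) hδ0] with h hh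
    rw [Metric.mem_ball, dist_eq_norm, sub_zero] at hh
    have hy : ‖(x + h) - x‖ < δ := by
      rw [add_sub_cancel_left]; exact hh
    have := hδ (x + h) hy k hkm
    rw [add_sub_cancel_left] at this
    simpa using this
  refine ⟨fun k => ?_, fun K hK ε hε => ?_⟩
  · rw [hfun k]
    exact (hhas k).differentiableAt
  · obtain ⟨R₀, hR₀⟩ := hK.isBounded.subset_closedBall 0
    set R : ℝ := max R₀ |k₀| with hRdef
    have hsubK : K ⊆ Icc (-R) R := by
      intro k hk
      have := hR₀ hk
      rw [Metric.mem_closedBall, Real.dist_eq, sub_zero] at this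
      constructor
      · have h1 := neg_abs_le k; have h2 := le_max_left R₀ |k₀|; simp only [hRdef]; nlinarith [abs_nonneg k]
      · have h1 := le_abs_self k; have h2 := le_max_left R₀ |k₀|; simp only [hRdef]; linarith
    obtain ⟨δ, hδ0, hδ⟩ := master R (le_max_right _ _) ε hε
    refine ⟨δ, hδ0, fun y hy k hk => ?_⟩
    rw [key y k, key x k, hfun k, (hhas k).fderiv]
    exact hδ y hy k (hsubK hk)
end
end

section
/- Fix k₀ ∈ ℝ and for n ∈ ℕ let η_n(k) := √((k − k₀)² + 1/n). Let g : ℝ → ℝ be continuous. Then for every k ∈ ℝ, lim_{n→∞} ∫_{k₀}^{k} η_n''(ω) g(ω) dω = sign(k − k₀) g(k₀), where sign(0) := 0 and the integral is oriented (∫_{k₀}^{k} := −∫_{k}^{k₀} when k < k₀). -/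
open MeasureTheory Filter Set
open scoped Topology RealInnerProductSpace

noncomputable section


lemma upos (k₀ : ℝ) {c : ℝ} (hc : 0 < c) (x : ℝ) : 0 < (x - k₀) ^ 2 + c :=
  add_pos_of_nonneg_of_pos (sq_nonneg _) hc

lemma continuous_phi (k₀ : ℝ) {c : ℝ} (hc : 0 < c) :
    Continuous (fun x : ℝ => c / (((x - k₀) ^ 2 + c) * Real.sqrt ((x - k₀) ^ 2 + c))) := by
  apply continuous_const.div
  · fun_prop
  · intro x
    have h1 := upos k₀ hc x
    have h2 : 0 < Real.sqrt ((x - k₀) ^ 2 + c) := Real.sqrt_pos.2 h1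
    positivity

lemma hasDerivAt_eta (k₀ : ℝ) {c : ℝ} (hc : 0 < c) (x : ℝ) :
    HasDerivAt (fun s => Real.sqrt ((s - k₀) ^ 2 + c))
      ((x - k₀) / Real.sqrt ((x - k₀) ^ 2 + c)) x := by
  have hu : HasDerivAt (fun s : ℝ => (s - k₀) ^ 2 + c) (2 * (x - k₀)) x := by
    simpa using (((hasDerivAt_id x).sub_const k₀).pow 2).add_const c
  have hs := (Real.hasDerivAt_sqrt (ne_of_gt (upos k₀ hc x))).comp x hu
  have hq : Real.sqrt ((x - k₀) ^ 2 + c) ≠ 0 := ne_of_gt (Real.sqrt_pos.2 (upos k₀ hc x))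
  refine hs.congr_deriv ?_
  field_simp

lemma hasDerivAt_eta' (k₀ : ℝ) {c : ℝ} (hc : 0 < c) (x : ℝ) :
    HasDerivAt (fun s => (s - k₀) / Real.sqrt ((s - k₀) ^ 2 + c))
      (c / (((x - k₀) ^ 2 + c) * Real.sqrt ((x - k₀) ^ 2 + c))) x := by
  have hqpos : 0 < Real.sqrt ((x - k₀) ^ 2 + c) := Real.sqrt_pos.2 (upos k₀ hc x)
  have hq : Real.sqrt ((x - k₀) ^ 2 + c) ≠ 0 := ne_of_gt hqpos
  have hd := ((hasDerivAt_id x).sub_const k₀).div (hasDerivAt_eta k₀ hc x) hq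
  refine hd.congr_deriv ?_
  have hss : Real.sqrt ((x - k₀) ^ 2 + c) * Real.sqrt ((x - k₀) ^ 2 + c)
      = (x - k₀) ^ 2 + c := Real.mul_self_sqrt (le_of_lt (upos k₀ hc x))
  field_simp
  simp only [id]
  rw [Real.sq_sqrt (upos k₀ hc x).le]
  ring

lemma deriv_deriv_eta (k₀ : ℝ) {c : ℝ} (hc : 0 < c) (ω : ℝ) :
    deriv (deriv (fun s => Real.sqrt ((s - k₀) ^ 2 + c))) ω
      = c / (((ω - k₀) ^ 2 + c) * Real.sqrt ((ω - k₀) ^ 2 + c)) := by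
  have h1 : deriv (fun s => Real.sqrt ((s - k₀) ^ 2 + c))
      = fun s => (s - k₀) / Real.sqrt ((s - k₀) ^ 2 + c) := by
    funext x; exact (hasDerivAt_eta k₀ hc x).deriv
  rw [h1]
  exact (hasDerivAt_eta' k₀ hc ω).deriv

lemma integral_phi (k₀ : ℝ) {c : ℝ} (hc : 0 < c) (a b : ℝ) :
    ∫ x in a..b, c / (((x - k₀) ^ 2 + c) * Real.sqrt ((x - k₀) ^ 2 + c))
      = (b - k₀) / Real.sqrt ((b - k₀) ^ 2 + c)
        - (a - k₀) / Real.sqrt ((a - k₀) ^ 2 + c) :=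
  intervalIntegral.integral_eq_sub_of_hasDerivAt
    (fun x _ => hasDerivAt_eta' k₀ hc x)
    ((continuous_phi k₀ hc).intervalIntegrable a b)

lemma tendsto_ratio {d : ℝ} (hd : 0 < d) :
    Tendsto (fun n : ℕ => d / Real.sqrt (d ^ 2 + 1 / (n : ℝ))) atTop (𝓝 1) := by
  have h0 : Tendsto (fun n : ℕ => 1 / (n : ℝ)) atTop (𝓝 0) :=
    tendsto_one_div_atTop_nhds_zero_nat
  have hcont : ContinuousAt (fun c : ℝ => d / Real.sqrt (d ^ 2 + c)) 0 := by
    apply ContinuousAt.div continuousAt_const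
    · exact (Real.continuous_sqrt.comp (continuous_const.add continuous_id)).continuousAt
    · simp [Real.sqrt_pos.2 (by positivity : (0:ℝ) < d ^ 2)]
      exact (Real.sqrt_pos.2 (by positivity)).ne'
  have := (hcont.tendsto.comp h0)
  simpa [Function.comp_def, Real.sqrt_sq hd.le, div_self hd.ne'] using this

lemma key (k₀ a b : ℝ) (g : ℝ → ℝ) (hg : Continuous g)
    (hiφ : Tendsto (fun n : ℕ => ∫ x in Ioc a b,
        deriv (deriv (fun s => Real.sqrt ((s - k₀) ^ 2 + 1 / (n : ℝ)))) x) atTop (𝓝 1)) :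
    Tendsto (fun n : ℕ => ∫ x in Ioc a b,
        deriv (deriv (fun s => Real.sqrt ((s - k₀) ^ 2 + 1 / (n : ℝ)))) x * g x)
      atTop (𝓝 (g k₀)) := by
  set ψ : ℕ → ℝ → ℝ :=
    fun n x => deriv (deriv (fun s => Real.sqrt ((s - k₀) ^ 2 + 1 / (n : ℝ)))) x with hψ
  have cpos : ∀ n : ℕ, 0 < n → 0 < 1 / (n : ℝ) := fun n hn => by positivity
  have hmain :
      Tendsto (fun n : ℕ => ∫ x in Ioc a b, ψ n x • g x) atTop (𝓝 (g k₀)) := by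
    apply tendsto_setIntegral_peak_smul_of_integrableOn_of_tendsto
      (measurableSet_Ioc) (measurableSet_Ioc) (subset_rfl) (self_mem_nhdsWithin)
      (measure_Ioc_lt_top.ne) (x₀ := k₀)
    · -- nonnegativity
      filter_upwards [eventually_gt_atTop 0] with n hn x _
      show (0:ℝ) ≤ ψ n x
      have hval : ψ n x = (1 / (n : ℝ)) /
          (((x - k₀) ^ 2 + 1 / (n : ℝ)) * Real.sqrt ((x - k₀) ^ 2 + 1 / (n : ℝ))) :=
        deriv_deriv_eta k₀ (cpos n hn) x
      rw [hval]
      have h1 := upos k₀ (cpos n hn) x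
      have h2 : 0 ≤ Real.sqrt ((x - k₀) ^ 2 + 1 / (n : ℝ)) := Real.sqrt_nonneg _
      positivity
    · -- uniform convergence away from k₀
      intro u hu hk₀u
      obtain ⟨δ, hδ, hball⟩ := Metric.isOpen_iff.1 hu k₀ hk₀u
      rw [Metric.tendstoUniformlyOn_iff]
      intro ε hε
      have hδ3 : 0 < ε * δ ^ 3 := by positivity
      filter_upwards [eventually_gt_atTop 0,
        tendsto_one_div_atTop_nhds_zero_nat.eventually_lt_const hδ3] with n hn hlt x hx
      have hc := cpos n hn
      have hxd : δ ≤ |x - k₀| := by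
        by_contra h
        push_neg at h
        exact hx.2 (hball (by simpa [Metric.mem_ball, Real.dist_eq] using h))
      have hU : δ ^ 2 ≤ (x - k₀) ^ 2 + 1 / (n : ℝ) := by
        have : δ ^ 2 ≤ (x - k₀) ^ 2 := by
          rw [← sq_abs (x - k₀)]
          exact pow_le_pow_left₀ hδ.le hxd 2
        linarith [hc.le]
      have hSq : δ ≤ Real.sqrt ((x - k₀) ^ 2 + 1 / (n : ℝ)) := by
        calc δ = Real.sqrt (δ ^ 2) := by rw [Real.sqrt_sq hδ.le]
        _ ≤ _ := Real.sqrt_le_sqrt hU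
      have hden : δ ^ 3 ≤ ((x - k₀) ^ 2 + 1 / (n : ℝ)) * Real.sqrt ((x - k₀) ^ 2 + 1 / (n : ℝ)) := by
        calc δ ^ 3 = δ ^ 2 * δ := by ring
        _ ≤ _ := mul_le_mul hU hSq hδ.le (upos k₀ hc x).le
      have hval : ψ n x = (1 / (n : ℝ)) /
          (((x - k₀) ^ 2 + 1 / (n : ℝ)) * Real.sqrt ((x - k₀) ^ 2 + 1 / (n : ℝ))) :=
        deriv_deriv_eta k₀ hc x
      have hpos : (0:ℝ) < ((x - k₀) ^ 2 + 1 / (n : ℝ)) * Real.sqrt ((x - k₀) ^ 2 + 1 / (n : ℝ)) := by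
        have := upos k₀ hc x
        have := Real.sqrt_pos.2 (upos k₀ hc x)
        positivity
      have hle : ψ n x ≤ (1 / (n : ℝ)) / δ ^ 3 := by
        rw [hval]
        exact div_le_div_of_nonneg_left hc.le (by positivity) hden
      have hlt2 : (1 / (n : ℝ)) / δ ^ 3 < ε := by
        rw [div_lt_iff₀ (by positivity)]
        linarith [hlt]
      have hnn : 0 ≤ ψ n x := by
        rw [hval]; positivity
      rw [Pi.zero_apply, dist_comm, Real.dist_eq, sub_zero, abs_of_nonneg hnn]
      exact lt_of_le_of_lt hle hlt2
    · exact hiφ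
    · -- measurability
      filter_upwards [eventually_gt_atTop 0] with n hn
      show AEStronglyMeasurable (ψ n) _
      have hval2 : ψ n = fun x => (1 / (n : ℝ)) /
          (((x - k₀) ^ 2 + 1 / (n : ℝ)) * Real.sqrt ((x - k₀) ^ 2 + 1 / (n : ℝ))) := by
        funext x; exact deriv_deriv_eta k₀ (cpos n hn) x
      rw [hval2]
      exact (continuous_phi k₀ (cpos n hn)).aestronglyMeasurable.restrict
    · exact (hg.integrableOn_Icc).mono_set Ioc_subset_Icc_self
    · exact (hg.tendsto k₀).mono_left nhdsWithin_le_nhds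
  simpa only [smul_eq_mul, hψ] using hmain
lemma hi_right (k₀ k : ℝ) (hk : k₀ < k) :
    Tendsto (fun n : ℕ => ∫ x in Ioc k₀ k,
        deriv (deriv (fun s => Real.sqrt ((s - k₀) ^ 2 + 1 / (n : ℝ)))) x) atTop (𝓝 1) := by
  have heq : (fun n : ℕ => ∫ x in Ioc k₀ k,
      deriv (deriv (fun s => Real.sqrt ((s - k₀) ^ 2 + 1 / (n : ℝ)))) x)
      =ᶠ[atTop] fun n : ℕ => (k - k₀) / Real.sqrt ((k - k₀) ^ 2 + 1 / (n : ℝ)) := by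
    filter_upwards [eventually_gt_atTop 0] with n hn
    have hc : 0 < 1 / (n : ℝ) := by positivity
    rw [← intervalIntegral.integral_of_le hk.le,
      intervalIntegral.integral_congr (g := fun x => (1 / (n : ℝ)) /
        (((x - k₀) ^ 2 + 1 / (n : ℝ)) * Real.sqrt ((x - k₀) ^ 2 + 1 / (n : ℝ))))
        (fun x _ => deriv_deriv_eta k₀ hc x),
      integral_phi k₀ hc]
    simp
  exact Tendsto.congr' heq.symm (tendsto_ratio (sub_pos.2 hk))

lemma hi_left (k₀ k : ℝ) (hk : k < k₀) :
    Tendsto (fun n : ℕ => ∫ x in Ioc k k₀,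
        deriv (deriv (fun s => Real.sqrt ((s - k₀) ^ 2 + 1 / (n : ℝ)))) x) atTop (𝓝 1) := by
  have heq : (fun n : ℕ => ∫ x in Ioc k k₀,
      deriv (deriv (fun s => Real.sqrt ((s - k₀) ^ 2 + 1 / (n : ℝ)))) x)
      =ᶠ[atTop] fun n : ℕ => (k₀ - k) / Real.sqrt ((k₀ - k) ^ 2 + 1 / (n : ℝ)) := by
    filter_upwards [eventually_gt_atTop 0] with n hn
    have hc : 0 < 1 / (n : ℝ) := by positivity
    rw [← intervalIntegral.integral_of_le hk.le,
      intervalIntegral.integral_congr (g := fun x => (1 / (n : ℝ)) /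
        (((x - k₀) ^ 2 + 1 / (n : ℝ)) * Real.sqrt ((x - k₀) ^ 2 + 1 / (n : ℝ))))
        (fun x _ => deriv_deriv_eta k₀ hc x),
      integral_phi k₀ hc,
      show ((k : ℝ) - k₀) ^ 2 = (k₀ - k) ^ 2 by ring]
    simp only [sub_self, zero_div, zero_sub, ← neg_div, neg_sub]
  exact Tendsto.congr' heq.symm (tendsto_ratio (sub_pos.2 hk))

/-- With `η_n(k) := √((k−k₀)² + 1/n)` and `g : ℝ → ℝ` continuous, for every
`k ∈ ℝ` one has `lim_{n→∞} ∫_{k₀}^{k} η_n''(ω) g(ω) dω = sign(k − k₀) g(k₀)` (oriented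
integral). -/
theorem statement8 (k₀ : ℝ) (g : ℝ → ℝ) (hg : Continuous g) :
    ∀ k : ℝ,
      Tendsto (fun n : ℕ =>
          ∫ ω in k₀..k,
            deriv (deriv (fun s => Real.sqrt ((s - k₀) ^ 2 + 1 / (n : ℝ)))) ω * g ω)
        atTop (𝓝 (Real.sign (k - k₀) * g k₀)) := by
  intro k
  rcases lt_trichotomy k k₀ with h | h | h
  · rw [Real.sign_of_neg (sub_neg.2 h), neg_one_mul]
    have hk := (key k₀ k k₀ g hg (hi_left k₀ k h)).neg
    refine hk.congr fun n => ?_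
    rw [intervalIntegral.integral_symm, intervalIntegral.integral_of_le h.le]
  · simp only [h, sub_self, Real.sign_zero, zero_mul, intervalIntegral.integral_same]
    exact tendsto_const_nhds
  · rw [Real.sign_of_pos (sub_pos.2 h), one_mul]
    have hk := key k₀ k₀ k g hg (hi_right k₀ k h)
    exact hk.congr fun n => (intervalIntegral.integral_of_le h.le).symm
end
end
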